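/- arXiv:1411.1480 — 7 statements merged into one kernel-verified Lean document; each statement's English description precedes it below -/
import Mathlib

section
/- Let k, t be positive integers with t ≤ k−1 and let P be a set of size k+t−1. Then the family F of all k-subsets of P is a closed intersecting family: F is intersecting, τ(F) = t, and F equals the family of transversals of F ∪ F^⊤; moreover F^⊤ is exactly the family of all t-subsets of P. -/
open Finset

variable {α : Type*} {β : Type*}

/-- `C` is a blocking set of the family `F`: it meets every block of `F`. -/
def IsBlocking (F : Set (Finset α)) (C : Finset α) : Prop :=
  ∀ B ∈ F, ∃ x ∈ B, x ∈ C

/-- The transversal number `τ(F)`: the minimum size of a (finite) blocking set. -/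
noncomputable def tau (F : Set (Finset α)) : ℕ :=
  sInf {n | ∃ C : Finset α, C.card = n ∧ IsBlocking F C}

/-- The family `F^⊤` of transversals, i.e. minimum-size blocking sets of `F`. -/
noncomputable def transversals (F : Set (Finset α)) : Set (Finset α) :=
  {C | IsBlocking F C ∧ C.card = tau F}

/-- A family is intersecting if any two of its blocks meet. -/
def FamIntersecting (F : Set (Finset α)) : Prop :=
  ∀ A ∈ F, ∀ B ∈ F, ∃ x ∈ A, x ∈ B

/-- A family is `k`-uniform if all its blocks have size `k`. -/
def FamUniform (F : Set (Finset α)) (k : ℕ) : Prop :=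
  ∀ B ∈ F, B.card = k

/-- `F` has a finite blocking set (τ(F) < ∞). -/
def HasBlocking (F : Set (Finset α)) : Prop :=
  ∃ C : Finset α, IsBlocking F C

/-- Maximal intersecting family of `k`-sets: uniform, τ < ∞ and `F = F^⊤`. -/
noncomputable def MIF (F : Set (Finset α)) (k : ℕ) : Prop :=
  FamUniform F k ∧ HasBlocking F ∧ F = transversals F

/-- Closed intersecting family `CIF(k,t)`: a `k`-uniform intersecting family with
`τ(F) = t ≤ k - 1` and `F = (F ∪ F^⊤)^⊤`. -/
noncomputable def CIF (F : Set (Finset α)) (k t : ℕ) : Prop :=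
  FamUniform F k ∧ FamIntersecting F ∧ tau F = t ∧ t ≤ k - 1 ∧
    F = transversals (F ∪ transversals F)

/-- The point set of a family. -/
def pts (F : Set (Finset α)) : Set α := ⋃ B ∈ F, (B : Set α)

/-- `G ⊛ H`: all unions `A ∪ B` with `A ∈ G`, `B ∈ H` (for point-disjoint families
these are disjoint unions). -/
def star [DecidableEq α] (G H : Set (Finset α)) : Set (Finset α) :=
  {C | ∃ A ∈ G, ∃ B ∈ H, C = A ∪ B}

lemma block_subsets_iff [DecidableEq α] (P C : Finset α) (d : ℕ) :
    IsBlocking {B : Finset α | B ⊆ P ∧ B.card = d} C ↔ (P \ C).card < d := by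
  constructor
  · intro h
    by_contra hle
    push_neg at hle
    obtain ⟨B, hBsub, hBcard⟩ := Finset.exists_subset_card_eq hle
    obtain ⟨x, hxB, hxC⟩ := h B ⟨hBsub.trans (Finset.sdiff_subset), hBcard⟩
    exact (Finset.mem_sdiff.mp (hBsub hxB)).2 hxC
  · intro h B hB
    by_contra hno
    push_neg at hno
    have hsub : B ⊆ P \ C := fun x hx => Finset.mem_sdiff.mpr ⟨hB.1 hx, hno x hx⟩
    have h2 := Finset.card_le_card hsub
    have h3 := hB.2
    omega

lemma card_sdiff_eq [DecidableEq α] (P C : Finset α) :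
    (P \ C).card = P.card - (P ∩ C).card := by
  have := Finset.card_sdiff_add_card_inter P C
  omega

lemma tau_subsets [DecidableEq α] (P : Finset α) (d : ℕ) (hd1 : 1 ≤ d)
    (hd : d ≤ P.card) :
    tau {B : Finset α | B ⊆ P ∧ B.card = d} = P.card + 1 - d := by
  apply le_antisymm
  · obtain ⟨C, hCsub, hCcard⟩ := Finset.exists_subset_card_eq
      (show P.card + 1 - d ≤ P.card by omega)
    apply Nat.sInf_le
    refine ⟨C, hCcard, (block_subsets_iff P C d).mpr ?_⟩
    rw [Finset.card_sdiff_of_subset hCsub, hCcard]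
    omega
  · apply le_csInf
    · obtain ⟨C, hCsub, hCcard⟩ := Finset.exists_subset_card_eq
        (show P.card + 1 - d ≤ P.card by omega)
      refine ⟨P.card + 1 - d, C, hCcard, (block_subsets_iff P C d).mpr ?_⟩
      rw [Finset.card_sdiff_of_subset hCsub, hCcard]; omega
    · rintro n ⟨C, hCcard, hblock⟩
      rw [block_subsets_iff] at hblock
      rw [card_sdiff_eq] at hblock
      have h1 : (P ∩ C).card ≤ C.card := Finset.card_le_card (Finset.inter_subset_right)
      omega

lemma transversals_subsets [DecidableEq α] (P : Finset α) (d : ℕ) (hd1 : 1 ≤ d)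
    (hd : d ≤ P.card) :
    transversals {B : Finset α | B ⊆ P ∧ B.card = d} =
      {T : Finset α | T ⊆ P ∧ T.card = P.card + 1 - d} := by
  ext C
  simp only [transversals, Set.mem_setOf_eq, block_subsets_iff,
    tau_subsets P d hd1 hd]
  constructor
  · rintro ⟨hb, hc⟩
    rw [card_sdiff_eq] at hb
    have h1 : (P ∩ C).card ≤ C.card := Finset.card_le_card (Finset.inter_subset_right)
    have h2 : C.card ≤ (P ∩ C).card := by omega
    have : P ∩ C = C := Finset.eq_of_subset_of_card_le Finset.inter_subset_right h2
    refine ⟨?_, hc⟩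
    rw [← this]; exact Finset.inter_subset_left
  · rintro ⟨hsub, hc⟩
    refine ⟨?_, hc⟩
    rw [Finset.card_sdiff_of_subset hsub, hc]
    omega

lemma blocking_union_iff (F G : Set (Finset α)) (C : Finset α) :
    IsBlocking (F ∪ G) C ↔ IsBlocking F C ∧ IsBlocking G C := by
  constructor
  · intro h
    exact ⟨fun B hB => h B (Or.inl hB), fun B hB => h B (Or.inr hB)⟩
  · rintro ⟨h1, h2⟩ B hB
    cases hB with
    | inl h => exact h1 B h
    | inr h => exact h2 B h

lemma transversals_congr (F G : Set (Finset α))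
    (h : ∀ C, IsBlocking F C ↔ IsBlocking G C) :
    transversals F = transversals G := by
  have htau : tau F = tau G := by
    unfold tau
    congr 1
    ext n
    simp only [Set.mem_setOf_eq, h]
  unfold transversals
  ext C
  simp [h, htau]

theorem stmt_1 (k t : ℕ) (hk : 1 ≤ k) (ht : 1 ≤ t) (htk : t ≤ k - 1)
    (P : Finset α) (hP : P.card = k + t - 1) :
    CIF {B : Finset α | B ⊆ P ∧ B.card = k} k t ∧
    transversals {B : Finset α | B ⊆ P ∧ B.card = k} =
      {T : Finset α | T ⊆ P ∧ T.card = t} := by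
  classical
  have hkP : k ≤ P.card := by omega
  have htP : t ≤ P.card := by omega
  have htrans : transversals {B : Finset α | B ⊆ P ∧ B.card = k} =
      {T : Finset α | T ⊆ P ∧ T.card = t} := by
    rw [transversals_subsets P k hk hkP]
    have : P.card + 1 - k = t := by omega
    rw [this]
  refine ⟨⟨fun B hB => hB.2, ?_, ?_, htk, ?_⟩, htrans⟩
  · -- intersecting
    intro A hA B hB
    have hU : (A ∪ B).card ≤ P.card :=
      Finset.card_le_card (Finset.union_subset hA.1 hB.1)
    have := Finset.card_union_add_card_inter A B
    have hA2 := hA.2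
    have hB2 := hB.2
    have hI : 1 ≤ (A ∩ B).card := by omega
    obtain ⟨x, hx⟩ := Finset.card_pos.mp hI
    exact ⟨x, (Finset.mem_inter.mp hx).1, (Finset.mem_inter.mp hx).2⟩
  · rw [tau_subsets P k hk hkP]; omega
  · rw [htrans]
    have hbl : ∀ C : Finset α,
        IsBlocking ({B : Finset α | B ⊆ P ∧ B.card = k} ∪
          {T : Finset α | T ⊆ P ∧ T.card = t}) C ↔
        IsBlocking {T : Finset α | T ⊆ P ∧ T.card = t} C := by
      intro C
      rw [blocking_union_iff, block_subsets_iff, block_subsets_iff]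
      omega
    rw [transversals_congr _ _ hbl, transversals_subsets P t ht htP]
    have : P.card + 1 - t = k := by omega
    rw [this]
end

section
/- Let X be a maximal intersecting family of k-sets, F a subfamily of X with t := τ(F) ≤ k−1, and suppose X ∖ F = A ⊛ F^⊤ for some family A whose point set is disjoint from that of F. Then F is a closed intersecting family CIF(k,t) if and only if A is a maximal intersecting family of (k−t)-sets. -/
open Finset

variable {α : Type*} {β : Type*}

section helpers
variable {α : Type*} [DecidableEq α]
set_option linter.unusedSectionVars false

lemma tau_le_card {F : Set (Finset α)} {C : Finset α} (h : IsBlocking F C) :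
    tau F ≤ C.card := Nat.sInf_le ⟨C, rfl, h⟩

lemma mem_pts {F : Set (Finset α)} {B : Finset α} (hB : B ∈ F) {x : α} (hx : x ∈ B) :
    x ∈ pts F := Set.mem_biUnion hB hx

lemma transversal_subset_pts {F : Set (Finset α)} {C : Finset α}
    (hb : IsBlocking F C) (hc : C.card ≤ tau F) : ∀ x ∈ C, x ∈ pts F := by
  intro x hx
  by_contra hxp
  have hb' : IsBlocking F (C.erase x) := by
    intro B hB
    obtain ⟨y, hyB, hyC⟩ := hb B hB
    exact ⟨y, hyB, Finset.mem_erase.mpr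
      ⟨fun h => hxp (by subst h; exact mem_pts hB hyB), hyC⟩⟩
  have h1 := tau_le_card hb'
  rw [Finset.card_erase_of_mem hx] at h1
  have h2 : 1 ≤ C.card := Finset.card_pos.mpr ⟨x, hx⟩
  omega

end helpers

theorem stmt_2 [DecidableEq α] (X F A : Set (Finset α)) (k t : ℕ)
    (hX : MIF X k) (hFX : F ⊆ X) (ht : tau F = t) (htk : t ≤ k - 1)
    (hd : Disjoint (pts A) (pts F))
    (hsplit : X \ F = star A (transversals F)) :
    CIF F k t ↔ MIF A (k - t) := by
  obtain ⟨hXu, hXb, hXt⟩ := hX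
  -- X is nonempty
  have hXne : X.Nonempty := by
    rcases Set.eq_empty_or_nonempty X with hXe | h
    · exfalso
      have h0 : (∅ : Finset α) ∈ transversals X := by
        subst hXe
        refine ⟨fun B hB => absurd hB (Set.notMem_empty B), ?_⟩
        have h1 : tau (∅ : Set (Finset α)) ≤ 0 := by
          simpa using tau_le_card (C := (∅ : Finset α))
            (fun B hB => absurd hB (Set.notMem_empty B))
        simp [Nat.le_zero.mp h1]
      rw [← hXt] at h0
      subst hXe
      exact h0
    · exact h
  -- X is intersecting
  have hXi : FamIntersecting X := by
    intro B1 h1 B2 h2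
    rw [hXt] at h2
    exact h2.1 B1 h1
  obtain ⟨B0, hB0⟩ := hXne
  have htauX : tau X = k := by
    have h2 := hB0
    rw [hXt] at h2
    rw [← h2.2, hXu B0 hB0]
  have hk1 : 1 ≤ k := by
    obtain ⟨x, hx, -⟩ := hXi B0 hB0 B0 hB0
    have h3 := Finset.card_pos.mpr ⟨x, hx⟩
    rwa [hXu B0 hB0] at h3
  have htlt : t < k := by omega
  -- F has a blocking set, hence transversals of F exist
  have hFb : HasBlocking F := by
    obtain ⟨C, hC⟩ := hXb
    exact ⟨C, fun B hB => hC B (hFX hB)⟩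
  have hTne : ∃ T0, T0 ∈ transversals F := by
    obtain ⟨C, hC⟩ := hFb
    have hne : {n | ∃ C : Finset α, C.card = n ∧ IsBlocking F C}.Nonempty :=
      ⟨C.card, C, rfl, hC⟩
    obtain ⟨C0, hc0, hb0⟩ := Nat.sInf_mem hne
    exact ⟨C0, hb0, hc0⟩
  obtain ⟨T0, hT0⟩ := hTne
  have hT0b : IsBlocking F T0 := hT0.1
  have hT0c : T0.card = t := by rw [hT0.2, ht]
  -- transversals of F lie in pts F
  have hTp : ∀ T' ∈ transversals F, ∀ x ∈ T', x ∈ pts F := by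
    intro T' hT' x hx
    exact transversal_subset_pts hT'.1 (le_of_eq hT'.2) x hx
  -- points of A-blocks avoid transversals of F
  have hAT : ∀ A' ∈ A, ∀ T' ∈ transversals F, ∀ x, x ∈ A' → x ∉ T' := by
    intro A' hA' T' hT' x hxA hxT
    exact Set.disjoint_left.mp hd (mem_pts hA' hxA) (hTp T' hT' x hxT)
  have hstar_subX : star A (transversals F) ⊆ X := by
    rw [← hsplit]; exact Set.diff_subset
  rcases Set.eq_empty_or_nonempty F with hFe | hFne
  · -- F empty case
    subst hFe
    have htau0 : tau (∅ : Set (Finset α)) = 0 :=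
      Nat.le_zero.mp (by
        simpa using tau_le_card (C := (∅ : Finset α))
          (fun B hB => absurd hB (Set.notMem_empty B)))
    have ht0 : t = 0 := by rw [← ht, htau0]
    have hTeq : transversals (∅ : Set (Finset α)) = {∅} := by
      ext C
      constructor
      · intro hC
        have h4 : C.card = 0 := by rw [hC.2, htau0]
        simpa [Finset.card_eq_zero] using h4
      · rintro rfl
        exact ⟨fun B hB => absurd hB (Set.notMem_empty B), by simp [htau0]⟩
    have hAX : A = X := by
      ext C
      constructor
      · intro hC
        have h5 : C ∈ star A (transversals (∅ : Set (Finset α))) := by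
          rw [hTeq]
          exact ⟨C, hC, ∅, rfl, by simp⟩
        rw [← hsplit] at h5
        exact h5.1
      · intro hC
        have h5 : C ∈ star A (transversals (∅ : Set (Finset α))) := by
          rw [← hsplit]; exact ⟨hC, Set.notMem_empty C⟩
        rw [hTeq] at h5
        obtain ⟨A', hA', B, hB, rfl⟩ := h5
        simp only [Set.mem_singleton_iff] at hB
        subst hB
        simpa using hA'
    have hMIFA : MIF A (k - t) := by
      rw [hAX, ht0, Nat.sub_zero]
      exact ⟨hXu, hXb, hXt⟩
    have hCIFF : CIF (∅ : Set (Finset α)) k t := by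
      refine ⟨fun B hB => absurd hB (Set.notMem_empty B),
        fun B hB => absurd hB (Set.notMem_empty B), by rw [htau0, ht0], htk, ?_⟩
      have hu : (∅ : Set (Finset α)) ∪ transversals (∅ : Set (Finset α)) = {∅} := by
        rw [hTeq, Set.empty_union]
      rw [hu]
      ext C
      simp only [Set.mem_empty_iff_false, false_iff]
      intro hC
      obtain ⟨x, hx, -⟩ := hC.1 ∅ rfl
      exact absurd hx (Finset.notMem_empty x)
    exact iff_of_true hCIFF hMIFA
  · -- F nonempty case
    obtain ⟨B1, hB1⟩ := hFne
    have hFi : FamIntersecting F := fun a ha b hb => hXi a (hFX ha) b (hFX hb)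
    have hFu : FamUniform F k := fun B hB => hXu B (hFX hB)
    -- blocking sets of F ∪ F^⊤ block X
    have hL2' : ∀ C : Finset α, IsBlocking (F ∪ transversals F) C → IsBlocking X C := by
      intro C hC B hB
      by_cases hBF : B ∈ F
      · exact hC B (Or.inl hBF)
      · have hBs : B ∈ star A (transversals F) := by
          rw [← hsplit]; exact ⟨hB, hBF⟩
        obtain ⟨A', hA', T', hT', rfl⟩ := hBs
        obtain ⟨x, hx1, hx2⟩ := hC T' (Or.inr hT')
        exact ⟨x, Finset.mem_union_right _ hx1, hx2⟩
    have hL2 : ∀ C : Finset α, IsBlocking (F ∪ transversals F) C → k ≤ C.card := by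
      intro C hC
      have h6 := tau_le_card (hL2' C hC)
      rwa [htauX] at h6
    have hB1b : IsBlocking (F ∪ transversals F) B1 := by
      intro B hB
      rcases hB with hB | hB
      · exact hFi B hB B1 hB1
      · obtain ⟨x, hx1, hx2⟩ := hB.1 B1 hB1
        exact ⟨x, hx2, hx1⟩
    have htFT : tau (F ∪ transversals F) = k := by
      have h1 : tau (F ∪ transversals F) ≤ k := by
        have h7 := tau_le_card hB1b
        rwa [hFu B1 hB1] at h7
      have h2 : k ≤ tau (F ∪ transversals F) := by
        unfold tau
        refine le_csInf ⟨B1.card, B1, rfl, hB1b⟩ ?_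
        rintro n ⟨C, rfl, hC⟩
        exact hL2 C hC
      omega
    -- CIF F k t holds
    have hCIFF : CIF F k t := by
      refine ⟨hFu, hFi, ht, htk, ?_⟩
      apply Set.Subset.antisymm
      · intro B hB
        refine ⟨?_, ?_⟩
        · intro B' hB'
          rcases hB' with h | h
          · exact hFi B' h B hB
          · obtain ⟨x, hx1, hx2⟩ := h.1 B hB
            exact ⟨x, hx2, hx1⟩
        · rw [hFu B hB, htFT]
      · intro C hC
        obtain ⟨hCb, hCc⟩ := hC
        have hCX : C ∈ X := by
          rw [hXt]
          exact ⟨hL2' C hCb, by rw [hCc, htFT, htauX]⟩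
        by_contra hCF
        have hCs : C ∈ star A (transversals F) := by
          rw [← hsplit]; exact ⟨hCX, hCF⟩
        obtain ⟨A1, hA1, T1, hT1, rfl⟩ := hCs
        have hT1b : IsBlocking (F ∪ transversals F) T1 := by
          intro B hB
          rcases hB with h | h
          · exact hT1.1 B h
          · obtain ⟨x, hx1, hx2⟩ := hCb B (Or.inr h)
            rcases Finset.mem_union.mp hx2 with hx3 | hx3
            · exact absurd hx1 (hAT A1 hA1 B h x hx3)
            · exact ⟨x, hx1, hx3⟩
        have h8 := hL2 T1 hT1b
        have hT1c : T1.card = t := by rw [hT1.2, ht]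
        omega
    -- A is intersecting
    have hAi : FamIntersecting A := by
      intro A1 hA1 A2 hA2
      by_contra h
      push_neg at h
      have hT0bb : IsBlocking (F ∪ transversals F) T0 := by
        intro B hB
        rcases hB with hBF | hBT
        · exact hT0b B hBF
        · have hmem : A1 ∪ T0 ∈ X := hstar_subX ⟨A1, hA1, T0, hT0, rfl⟩
          have hbl : IsBlocking X (A1 ∪ T0) := by rw [hXt] at hmem; exact hmem.1
          have h2 : A2 ∪ B ∈ X := hstar_subX ⟨A2, hA2, B, hBT, rfl⟩
          obtain ⟨x, hx1, hx2⟩ := hbl (A2 ∪ B) h2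
          rcases Finset.mem_union.mp hx1 with hx3 | hx3
          · rcases Finset.mem_union.mp hx2 with hx4 | hx4
            · exact absurd hx3 (h x hx4)
            · exact absurd hx4 (hAT A2 hA2 T0 hT0 x hx3)
          · rcases Finset.mem_union.mp hx2 with hx4 | hx4
            · exact absurd hx3 (hAT A1 hA1 B hBT x hx4)
            · exact ⟨x, hx3, hx4⟩
      have h9 := hL2 T0 hT0bb
      omega
    -- A is nonempty
    have hAne : A.Nonempty := by
      rcases Set.eq_empty_or_nonempty A with hAe | h
      · exfalso
        have hXF : X = F := by
          apply Set.Subset.antisymm _ hFX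
          intro B hB
          by_contra hBF
          have hBs : B ∈ star A (transversals F) := by
            rw [← hsplit]; exact ⟨hB, hBF⟩
          obtain ⟨A', hA', -, -, -⟩ := hBs
          rw [hAe] at hA'
          exact hA'
        rw [hXF, ht] at htauX
        omega
      · exact h
    obtain ⟨A0, hA0⟩ := hAne
    have hdisjAT : ∀ A' ∈ A, Disjoint A' T0 := fun A' hA' =>
      Finset.disjoint_left.mpr (fun {x} hx => hAT A' hA' T0 hT0 x hx)
    have hAu : FamUniform A (k - t) := by
      intro A' hA'
      have hm : A' ∪ T0 ∈ X := hstar_subX ⟨A', hA', T0, hT0, rfl⟩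
      have hc := hXu _ hm
      rw [Finset.card_union_of_disjoint (hdisjAT A' hA')] at hc
      omega
    have hA0b : IsBlocking A A0 := fun B hB => hAi B hB A0 hA0
    have hblockX : ∀ C : Finset α, IsBlocking A C → IsBlocking X (C ∪ T0) := by
      intro C hC B hB
      by_cases hBF : B ∈ F
      · obtain ⟨x, hx1, hx2⟩ := hT0b B hBF
        exact ⟨x, hx1, Finset.mem_union_right _ hx2⟩
      · have hBs : B ∈ star A (transversals F) := by
          rw [← hsplit]; exact ⟨hB, hBF⟩
        obtain ⟨A', hA', T', hT', rfl⟩ := hBs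
        obtain ⟨x, hx1, hx2⟩ := hC A' hA'
        exact ⟨x, Finset.mem_union_left _ hx1, Finset.mem_union_left _ hx2⟩
    have htauA : tau A = k - t := by
      have h1 : tau A ≤ k - t := by
        have h10 := tau_le_card hA0b
        rwa [hAu A0 hA0] at h10
      have h2 : k - t ≤ tau A := by
        unfold tau
        refine le_csInf ⟨A0.card, A0, rfl, hA0b⟩ ?_
        rintro n ⟨C, rfl, hC⟩
        have h11 := tau_le_card (hblockX C hC)
        rw [htauX] at h11
        have hcu := Finset.card_union_le C T0
        omega
      omega
    have hMIFA : MIF A (k - t) := by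
      refine ⟨hAu, ⟨A0, hA0b⟩, ?_⟩
      apply Set.Subset.antisymm
      · intro B hB
        exact ⟨fun B' hB' => hAi B' hB' B hB, by rw [hAu B hB, htauA]⟩
      · intro C hC
        obtain ⟨hCb, hCc⟩ := hC
        rw [htauA] at hCc
        have hCp : ∀ x ∈ C, x ∈ pts A :=
          transversal_subset_pts hCb (by rw [hCc, htauA])
        have hCT0 : Disjoint C T0 := Finset.disjoint_left.mpr fun {x} hx hxT =>
          Set.disjoint_left.mp hd (hCp _ hx) (hTp T0 hT0 _ hxT)
        have hm : C ∪ T0 ∈ X := by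
          rw [hXt]
          refine ⟨hblockX C hCb, ?_⟩
          rw [Finset.card_union_of_disjoint hCT0, hCc, hT0c, htauX]
          omega
        have hnF : C ∪ T0 ∉ F := by
          intro hF'
          have hCne : C.Nonempty := Finset.card_pos.mp (by omega)
          obtain ⟨c, hc⟩ := hCne
          exact Set.disjoint_left.mp hd (hCp c hc)
            (mem_pts hF' (Finset.mem_union_left _ hc))
        have hCs : C ∪ T0 ∈ star A (transversals F) := by
          rw [← hsplit]; exact ⟨hm, hnF⟩
        obtain ⟨A2, hA2, T2, hT2, heq⟩ := hCs
        have hCA2 : C = A2 := by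
          ext x
          constructor
          · intro hx
            have hx1 : x ∈ A2 ∪ T2 := by
              rw [← heq]; exact Finset.mem_union_left _ hx
            rcases Finset.mem_union.mp hx1 with h' | h'
            · exact h'
            · exact (Set.disjoint_left.mp hd (hCp x hx) (hTp T2 hT2 x h')).elim
          · intro hx
            have hx1 : x ∈ C ∪ T0 := by
              rw [heq]; exact Finset.mem_union_left _ hx
            rcases Finset.mem_union.mp hx1 with h' | h'
            · exact h'
            · exact absurd h' (hAT A2 hA2 T0 hT0 x hx)
        rw [hCA2]; exact hA2
    exact iff_of_true hCIFF hMIFA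
end

section
/- If F is a closed intersecting family CIF(k,t), then for every transversal T ∈ F^⊤ there exists another transversal T' ∈ F^⊤ with T ∩ T' = ∅. -/
open Finset

variable {α : Type*} {β : Type*}

theorem stmt_3 (F : Set (Finset α)) (k t : ℕ) (hF : CIF F k t) :
    ∀ T ∈ transversals F, ∃ T' ∈ transversals F, Disjoint T T' := by
  obtain ⟨hU, hI, htau, hle, hclosed⟩ := hF
  intro T hT
  obtain ⟨hTb, hTc⟩ := hT
  by_cases hne : F.Nonempty
  · obtain ⟨B, hB⟩ := hne
    have hBt : B ∈ transversals (F ∪ transversals F) := by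
      rw [← hclosed]; exact hB
    have hk : B.card = k := hU B hB
    have hk1 : 1 ≤ k := by
      rcases Nat.eq_zero_or_pos k with h0 | h
      · exfalso
        have hBe : B = ∅ := Finset.card_eq_zero.mp (h0 ▸ hk)
        obtain ⟨x, hx, _⟩ := hI B hB B hB
        simp [hBe] at hx
      · exact h
    have hTnb : ¬ IsBlocking (F ∪ transversals F) T := by
      intro hb
      have h1 : tau (F ∪ transversals F) ≤ T.card := Nat.sInf_le ⟨T, rfl, hb⟩
      have h2 : B.card = tau (F ∪ transversals F) := hBt.2
      omega
    simp only [IsBlocking, not_forall, not_exists] at hTnb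
    obtain ⟨D, hD, hdisj⟩ := hTnb
    have hdisj' : Disjoint T D := by
      rw [Finset.disjoint_right]
      intro a haD haT
      exact hdisj a ⟨haD, haT⟩
    rcases hD with hDF | hDT
    · obtain ⟨x, hx, hxT⟩ := hTb D hDF
      exact absurd ⟨hx, hxT⟩ (hdisj x)
    · exact ⟨D, hDT, hdisj'⟩
  · have hFe : F = ∅ := Set.not_nonempty_iff_eq_empty.mp hne
    have h0 : tau F = 0 := by
      apply Nat.le_zero.mp
      apply Nat.sInf_le
      exact ⟨∅, by simp, fun B hB => by simp [hFe] at hB⟩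
    have hTe : T = ∅ := Finset.card_eq_zero.mp (hTc.trans h0)
    exact ⟨T, ⟨hTb, hTc⟩, by simp [hTe]⟩
end

section
/- Let X be a maximal intersecting family of k-sets with k ≥ 2 and let α be a point of X. Then F := {B ∈ X : α ∉ B} is a closed intersecting family CIF(k, k−1), F^⊤ = {B ∖ {α} : α ∈ B ∈ X}, and X = F ∪ ({α} ⊛ F^⊤). -/
open Finset

variable {α : Type*} {β : Type*}

lemma tau_le_of_blocking (F : Set (Finset α)) (C : Finset α) (h : IsBlocking F C) :
    tau F ≤ C.card :=
  Nat.sInf_le ⟨C, rfl, h⟩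

lemma exists_min_blocking (F : Set (Finset α)) (h : HasBlocking F) :
    ∃ C : Finset α, IsBlocking F C ∧ C.card = tau F := by
  obtain ⟨C, hC⟩ := h
  have hmem : tau F ∈ {n | ∃ C : Finset α, C.card = n ∧ IsBlocking F C} :=
    Nat.sInf_mem ⟨C.card, C, rfl, hC⟩
  obtain ⟨D, hD1, hD2⟩ := hmem
  exact ⟨D, hD2, hD1⟩

theorem stmt_5 [DecidableEq α] (X : Set (Finset α)) (k : ℕ) (hk : 2 ≤ k)
    (hX : MIF X k) (a : α) (ha : a ∈ pts X) :
    CIF {B ∈ X | a ∉ B} k (k - 1) ∧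
    transversals {B ∈ X | a ∉ B} = {C | ∃ B ∈ X, a ∈ B ∧ C = B.erase a} ∧
    X = {B ∈ X | a ∉ B} ∪
      star ({({a} : Finset α)} : Set (Finset α)) (transversals {B ∈ X | a ∉ B}) := by
  obtain ⟨hUnif, hHB, hXtrans⟩ := hX
  obtain ⟨B0, hB0X, haB0⟩ : ∃ B ∈ X, a ∈ B := by
    simpa [pts, Set.mem_iUnion] using ha
  have htauX : tau X = k := by
    have h1 : B0 ∈ transversals X := by rw [← hXtrans]; exact hB0X
    rw [← h1.2, hUnif B0 hB0X]
  have hint : FamIntersecting X := by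
    intro A hA B hB
    have hB' : B ∈ transversals X := by rw [← hXtrans]; exact hB
    exact hB'.1 A hA
  -- F nonempty
  obtain ⟨B1, hB1X, haB1⟩ : ∃ B ∈ X, a ∉ B := by
    by_contra h
    push_neg at h
    have hblock : IsBlocking X {a} := fun B hB => ⟨a, h B hB, mem_singleton_self a⟩
    have h2 := tau_le_of_blocking X {a} hblock
    rw [htauX, card_singleton] at h2
    omega
  have hB1F : B1 ∈ {B ∈ X | a ∉ B} := ⟨hB1X, haB1⟩
  have hEraseBlocks : ∀ B ∈ X, a ∈ B → IsBlocking {B ∈ X | a ∉ B} (B.erase a) := by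
    intro B hB _ A hA
    obtain ⟨x, hxA, hxB⟩ := hint A hA.1 B hB
    exact ⟨x, hxA, mem_erase.2 ⟨fun h => hA.2 (h ▸ hxA), hxB⟩⟩
  have hInsBlockX : ∀ C : Finset α, IsBlocking {B ∈ X | a ∉ B} C →
      IsBlocking X (insert a C) := by
    intro C hC B hB
    by_cases h : a ∈ B
    · exact ⟨a, h, mem_insert_self a C⟩
    · obtain ⟨x, hx, hxC⟩ := hC B ⟨hB, h⟩
      exact ⟨x, hx, mem_insert_of_mem hxC⟩
  have hFeraseBlocks : ∀ C : Finset α, IsBlocking {B ∈ X | a ∉ B} C →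
      IsBlocking {B ∈ X | a ∉ B} (C.erase a) := by
    intro C hC A hA
    obtain ⟨x, hxA, hxC⟩ := hC A hA
    exact ⟨x, hxA, mem_erase.2 ⟨fun h => hA.2 (h ▸ hxA), hxC⟩⟩
  have hBlockF_card : ∀ C : Finset α, IsBlocking {B ∈ X | a ∉ B} C → k - 1 ≤ C.card := by
    intro C hC
    have h1 : IsBlocking X (insert a (C.erase a)) := hInsBlockX _ (hFeraseBlocks C hC)
    have h2 := tau_le_of_blocking X _ h1
    rw [htauX] at h2
    have h3 : (insert a (C.erase a)).card ≤ (C.erase a).card + 1 := card_insert_le _ _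
    have h4 : (C.erase a).card ≤ C.card := card_erase_le
    omega
  have htauF : tau {B ∈ X | a ∉ B} = k - 1 := by
    apply le_antisymm
    · have h1 := tau_le_of_blocking _ _ (hEraseBlocks B0 hB0X haB0)
      rwa [card_erase_of_mem haB0, hUnif B0 hB0X] at h1
    · obtain ⟨C, hC, hCc⟩ := exists_min_blocking _ ⟨B0.erase a, hEraseBlocks B0 hB0X haB0⟩
      rw [← hCc]
      exact hBlockF_card C hC
  -- transversal characterization
  have hTchar : transversals {B ∈ X | a ∉ B} = {C | ∃ B ∈ X, a ∈ B ∧ C = B.erase a} := by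
    ext C
    constructor
    · rintro ⟨hCb, hCc⟩
      rw [htauF] at hCc
      have haC : a ∉ C := by
        intro haC
        have h1 := hBlockF_card _ (hFeraseBlocks C hCb)
        rw [card_erase_of_mem haC, hCc] at h1
        omega
      have hB : insert a C ∈ X := by
        rw [hXtrans]
        refine ⟨hInsBlockX C hCb, ?_⟩
        rw [card_insert_of_notMem haC, hCc, htauX]
        omega
      exact ⟨insert a C, hB, mem_insert_self a C, (erase_insert haC).symm⟩
    · rintro ⟨B, hBX, haB, rfl⟩
      exact ⟨hEraseBlocks B hBX haB,
        by rw [card_erase_of_mem haB, hUnif B hBX, htauF]⟩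
  -- part 3
  have hpart3 : X = {B ∈ X | a ∉ B} ∪
      star ({({a} : Finset α)} : Set (Finset α)) (transversals {B ∈ X | a ∉ B}) := by
    ext B
    constructor
    · intro hB
      by_cases h : a ∈ B
      · right
        refine ⟨{a}, rfl, B.erase a, ?_, ?_⟩
        · rw [hTchar]; exact ⟨B, hB, h, rfl⟩
        · rw [← insert_eq, insert_erase h]
      · left; exact ⟨hB, h⟩
    · rintro (hB | ⟨A, hA, C, hC, rfl⟩)
      · exact hB.1
      · rw [Set.mem_singleton_iff] at hA
        subst hA
        rw [hTchar] at hC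
        obtain ⟨B', hB', haB', rfl⟩ := hC
        rw [← insert_eq, insert_erase haB']
        exact hB'
  -- closure facts
  have hFblocksG : ∀ B ∈ {B ∈ X | a ∉ B},
      IsBlocking ({B ∈ X | a ∉ B} ∪ transversals {B ∈ X | a ∉ B}) B := by
    intro B hB A hA
    rcases hA with hA | hA
    · exact hint A hA.1 B hB.1
    · rw [hTchar] at hA
      obtain ⟨B', hB'X, haB', rfl⟩ := hA
      obtain ⟨x, hxB', hxB⟩ := hint B' hB'X B hB.1
      exact ⟨x, mem_erase.2 ⟨fun h => hB.2 (h ▸ hxB), hxB'⟩, hxB⟩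
  have hGeraseBlocksX : ∀ C : Finset α,
      IsBlocking ({B ∈ X | a ∉ B} ∪ transversals {B ∈ X | a ∉ B}) C →
      IsBlocking X (C.erase a) := by
    intro C hC B hB
    by_cases h : a ∈ B
    · have hBe : B.erase a ∈ transversals {B ∈ X | a ∉ B} := by
        rw [hTchar]; exact ⟨B, hB, h, rfl⟩
      obtain ⟨x, hx, hxC⟩ := hC _ (Or.inr hBe)
      have hxa : x ≠ a := fun he => (notMem_erase a B) (he ▸ hx)
      exact ⟨x, mem_of_mem_erase hx, mem_erase.2 ⟨hxa, hxC⟩⟩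
    · obtain ⟨x, hx, hxC⟩ := hC _ (Or.inl ⟨hB, h⟩)
      exact ⟨x, hx, mem_erase.2 ⟨fun he => h (he ▸ hx), hxC⟩⟩
  have htauG : tau ({B ∈ X | a ∉ B} ∪ transversals {B ∈ X | a ∉ B}) = k := by
    apply le_antisymm
    · have h1 := tau_le_of_blocking _ _ (hFblocksG B1 hB1F)
      rwa [hUnif B1 hB1X] at h1
    · obtain ⟨C, hC, hCc⟩ := exists_min_blocking _ ⟨B1, hFblocksG B1 hB1F⟩
      have h1 := tau_le_of_blocking X _ (hGeraseBlocksX C hC)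
      have h2 : (C.erase a).card ≤ C.card := card_erase_le
      rw [htauX] at h1
      omega
  have hclosure : {B ∈ X | a ∉ B} =
      transversals ({B ∈ X | a ∉ B} ∪ transversals {B ∈ X | a ∉ B}) := by
    ext C
    constructor
    · intro hC
      exact ⟨hFblocksG C hC, by rw [htauG, hUnif C hC.1]⟩
    · rintro ⟨hCb, hCc⟩
      rw [htauG] at hCc
      have hXblock := hGeraseBlocksX C hCb
      have haC : a ∉ C := by
        intro haC
        have h1 := tau_le_of_blocking X _ hXblock
        rw [htauX, card_erase_of_mem haC, hCc] at h1
        omega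
      rw [erase_eq_of_notMem haC] at hXblock
      have hCX : C ∈ X := by
        rw [hXtrans]
        exact ⟨hXblock, by rw [hCc, htauX]⟩
      exact ⟨hCX, haC⟩
  refine ⟨⟨fun B hB => hUnif B hB.1, fun A hA B hB => hint A hA.1 B hB.1,
    htauF, le_refl _, hclosure⟩, hTchar, hpart3⟩
end

section
/- With the hypotheses of the partition construction (F a CIF(k,t) whose transversal family F^⊤ is partitioned into C₁,…,Cₙ with every member of Cᵢ a blocking set of F^⊤ ∖ Cᵢ), the number of parts satisfies n ≤ (1/2)·C(2t, t). -/
open Finset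

variable {α : Type*} {β : Type*}

/-!
Bollobás's inequality `∑ 1 / C(aᵢ + bᵢ, aᵢ) ≤ 1` for pairs `(Aᵢ, Bᵢ)` with `Aᵢ ∩ Bᵢ = ∅` and
`Aᵢ ∩ Bⱼ ≠ ∅` (`i ≠ j`) goes by induction on the ground set `X`: for each `x ∈ X` the pairs
`(Aᵢ, Bᵢ \ {x})` with `x ∉ Aᵢ` again satisfy the hypotheses, and summing these inductive bounds
over `x` yields exactly `|X|` times the original sum.

For the partition `F^⊤ = C₁ ∪ ⋯ ∪ Cₙ`, each part `Cᵢ` contains two disjoint transversals `Tᵢ, Tᵢ'`: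
otherwise a member of `Cᵢ` would block `F ∪ F^⊤`, hence lie in `F = (F ∪ F^⊤)^⊤` by closedness,
although it has `t < k` elements. Members of different parts meet, so the `2n` pairs `(Tᵢ, Tᵢ')`,
`(Tᵢ', Tᵢ)` satisfy Bollobás's hypotheses with `a = b = t`.
-/

section Bollobas

variable {ι : Type*}

lemma sum_sdiff_inv_choose_card_erase [DecidableEq α] {A B X : Finset α} (hA : A ⊆ X) (hB : B ⊆ X)
    (hAB : Disjoint A B) (hBne : B.Nonempty) :
    ∑ x ∈ X \ A, ((#A + #(B.erase x)).choose #A : ℚ)⁻¹ =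
      #X * ((#A + #B).choose #A : ℚ)⁻¹ := by
  obtain ⟨b, hb⟩ : ∃ b, #B = b + 1 := Nat.exists_eq_succ_of_ne_zero hBne.card_pos.ne'
  have hin : (X \ A).filter (· ∈ B) = B := by
    ext x; simp only [mem_filter, mem_sdiff]
    exact ⟨And.right, fun hx => ⟨⟨hB hx, disjoint_right.1 hAB hx⟩, hx⟩⟩
  have hout : (X \ A).filter (· ∉ B) = X \ (A ∪ B) := by
    ext x; simp only [mem_filter, mem_sdiff, mem_union, not_or, and_assoc]
  have hle : #A + #B ≤ #X := card_union_of_disjoint hAB ▸ card_le_card (union_subset hA hB)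
  rw [← sum_filter_add_sum_filter_not _ (· ∈ B), hin, hout,
    sum_congr rfl fun x hx => by rw [card_erase_of_mem hx], sum_const,
    sum_congr rfl fun x hx => by rw [erase_eq_of_notMem (notMem_union.1 (mem_sdiff.1 hx).2).2],
    sum_const, card_sdiff_of_subset (union_subset hA hB), card_union_of_disjoint hAB,
    nsmul_eq_mul, nsmul_eq_mul, Nat.cast_sub hle, hb, Nat.add_sub_cancel]
  have key : ((b + 1 : ℕ) : ℚ) * ((#A + b).choose #A : ℚ)⁻¹ =
      ((#A + (b + 1) : ℕ) : ℚ) * ((#A + (b + 1)).choose #A : ℚ)⁻¹ := by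
    rw [← div_eq_mul_inv, ← div_eq_mul_inv, div_eq_div_iff
      (Nat.cast_ne_zero.2 (Nat.choose_pos (by omega)).ne')
      (Nat.cast_ne_zero.2 (Nat.choose_pos (by omega)).ne')]
    have h : (b + 1) * (#A + (b + 1)).choose #A = (#A + (b + 1)) * (#A + b).choose #A := by
      have := Nat.choose_mul_succ_eq (#A + b) #A
      rw [show #A + b + 1 - #A = b + 1 by omega] at this
      rw [← add_assoc]
      linarith
    exact_mod_cast h
  rw [key]
  ring

theorem bollobas_sum_inv_choose_le_one_of_subset [DecidableEq α] {X : Finset α} (s : Finset ι)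
    (A B : ι → Finset α) (hX : ∀ i ∈ s, A i ∪ B i ⊆ X)
    (hdisj : ∀ i ∈ s, Disjoint (A i) (B i))
    (hcross : ∀ i ∈ s, ∀ j ∈ s, i ≠ j → ¬Disjoint (A i) (B j)) :
    ∑ i ∈ s, ((#(A i) + #(B i)).choose #(A i) : ℚ)⁻¹ ≤ 1 := by
  induction X using Finset.strongInduction generalizing s B with
  | H X ih =>
  obtain hs | hs := le_or_gt #s 1
  · calc ∑ i ∈ s, ((#(A i) + #(B i)).choose #(A i) : ℚ)⁻¹ ≤ #s • (1 : ℚ) :=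
          sum_le_card_nsmul _ _ _ fun i _ =>
            inv_le_one_of_one_le₀ (Nat.one_le_cast.2 (Nat.choose_pos (by omega)))
      _ ≤ 1 := by rw [nsmul_one]; exact_mod_cast hs
  have hBne : ∀ i ∈ s, (B i).Nonempty := fun i hi => by
    obtain ⟨j, hj, hji⟩ := exists_mem_ne hs i
    exact (not_disjoint_iff_nonempty_inter.1 (hcross j hj i hi hji)).mono inter_subset_right
  have hXpos : 0 < #X := by
    obtain ⟨i, hi⟩ := card_pos.1 (by omega : 0 < #s)
    exact ((hBne i hi).mono (subset_union_right.trans (hX i hi))).card_pos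
  have hdelete : ∀ x ∈ X, ∑ i ∈ s with x ∉ A i,
      ((#(A i) + #((B i).erase x)).choose #(A i) : ℚ)⁻¹ ≤ 1 := fun x hx =>
    ih (X.erase x) (erase_ssubset hx) _ _
      (fun i hi => by
        rw [mem_filter] at hi
        exact union_subset
          (fun y hy => mem_erase.2 ⟨fun e => hi.2 (e ▸ hy), hX i hi.1 (mem_union_left _ hy)⟩)
          (erase_subset_erase x (subset_union_right.trans (hX i hi.1))))
      (fun i hi => (hdisj i (mem_filter.1 hi).1).mono_right (erase_subset _ _))
      (fun i hi j hj hij => by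
        rw [mem_filter] at hi hj
        obtain ⟨y, hyA, hyB⟩ := not_disjoint_iff.1 (hcross i hi.1 j hj.1 hij)
        exact not_disjoint_iff.2 ⟨y, hyA, mem_erase.2 ⟨fun h => hi.2 (h ▸ hyA), hyB⟩⟩)
  refine le_of_mul_le_mul_left ?_ (Nat.cast_pos.2 hXpos : (0 : ℚ) < #X)
  calc (#X : ℚ) * ∑ i ∈ s, ((#(A i) + #(B i)).choose #(A i) : ℚ)⁻¹
      = ∑ i ∈ s, ∑ x ∈ X \ A i, ((#(A i) + #((B i).erase x)).choose #(A i) : ℚ)⁻¹ := by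
        rw [mul_sum]
        refine sum_congr rfl fun i hi => (sum_sdiff_inv_choose_card_erase
          (subset_union_left.trans (hX i hi)) (subset_union_right.trans (hX i hi))
          (hdisj i hi) (hBne i hi)).symm
    _ = ∑ x ∈ X, ∑ i ∈ s with x ∉ A i, ((#(A i) + #((B i).erase x)).choose #(A i) : ℚ)⁻¹ :=
        sum_comm' fun i x => by simp only [mem_sdiff, mem_filter]; tauto
    _ ≤ ∑ x ∈ X, 1 := sum_le_sum hdelete
    _ = #X * 1 := by rw [sum_const, nsmul_eq_mul]

theorem bollobas_sum_inv_choose_le_one (s : Finset ι) (A B : ι → Finset α)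
    (hdisj : ∀ i ∈ s, Disjoint (A i) (B i))
    (hcross : ∀ i ∈ s, ∀ j ∈ s, i ≠ j → ¬Disjoint (A i) (B j)) :
    ∑ i ∈ s, ((#(A i) + #(B i)).choose #(A i) : ℚ)⁻¹ ≤ 1 := by
  classical
  exact bollobas_sum_inv_choose_le_one_of_subset s A B
    (fun i hi => subset_biUnion_of_mem (fun i => A i ∪ B i) hi) hdisj hcross

theorem bollobas_card_le_choose (s : Finset ι) (A B : ι → Finset α) {a b : ℕ}
    (hA : ∀ i ∈ s, #(A i) = a) (hB : ∀ i ∈ s, #(B i) = b)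
    (hdisj : ∀ i ∈ s, Disjoint (A i) (B i))
    (hcross : ∀ i ∈ s, ∀ j ∈ s, i ≠ j → ¬Disjoint (A i) (B j)) :
    #s ≤ (a + b).choose a := by
  have h := bollobas_sum_inv_choose_le_one s A B hdisj hcross
  rw [sum_congr rfl fun i hi => by rw [hA i hi, hB i hi], sum_const, nsmul_eq_mul,
    mul_inv_le_iff₀ (Nat.cast_pos.2 (Nat.choose_pos (Nat.le_add_right a b))), one_mul] at h
  exact_mod_cast h

end Bollobas

section Transversals

variable {F G : Set (Finset α)} {T : Finset α}

lemma IsBlocking.mono (hFG : F ⊆ G) (hT : IsBlocking G T) : IsBlocking F T :=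
  fun B hB => hT B (hFG hB)

lemma IsBlocking.nonempty (hF : F.Nonempty) (hT : IsBlocking F T) : T.Nonempty := by
  obtain ⟨B, hB⟩ := hF
  obtain ⟨x, -, hx⟩ := hT B hB
  exact ⟨x, hx⟩

lemma tau_le_card_s8 (hT : IsBlocking F T) : tau F ≤ #T :=
  Nat.sInf_le ⟨T, rfl, hT⟩

lemma transversals_nonempty (hF : HasBlocking F) : (transversals F).Nonempty := by
  obtain ⟨T₀, hT₀⟩ := hF
  obtain ⟨T, hcard, hT⟩ := Nat.sInf_mem (⟨#T₀, T₀, rfl, hT₀⟩ :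
    {n | ∃ C : Finset α, #C = n ∧ IsBlocking F C}.Nonempty)
  exact ⟨T, hT, hcard⟩

lemma tau_mono (hFG : F ⊆ G) (hG : HasBlocking G) : tau F ≤ tau G := by
  obtain ⟨T, hT, hcard⟩ := transversals_nonempty hG
  exact hcard ▸ tau_le_card_s8 (hT.mono hFG)

lemma mem_transversals_of_card_le_tau (hFG : F ⊆ G) (hT : IsBlocking G T)
    (hcard : #T ≤ tau F) : T ∈ transversals G :=
  ⟨hT, le_antisymm (hcard.trans (tau_mono hFG ⟨T, hT⟩)) (tau_le_card_s8 hT)⟩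

end Transversals

namespace CIF

variable {F : Set (Finset α)} {k t : ℕ} {T : Finset α}

lemma hasBlocking_of_nonempty (hF : CIF F k t) (hne : F.Nonempty) : HasBlocking F := by
  obtain ⟨B, hB⟩ := hne
  have hB' : B ∈ transversals (F ∪ transversals F) := hF.2.2.2.2 ▸ hB
  exact ⟨B, hB'.1.mono Set.subset_union_left⟩

lemma card_of_mem_transversals (hF : CIF F k t) (hT : T ∈ transversals F) : #T = t :=
  hT.2.trans hF.2.2.1

lemma pos_of_nonempty (hF : CIF F k t) (hne : F.Nonempty) : 0 < t := by
  obtain ⟨T, hT⟩ := transversals_nonempty (hF.hasBlocking_of_nonempty hne)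
  exact hF.card_of_mem_transversals hT ▸ (hT.1.nonempty hne).card_pos

lemma not_isBlocking_union_transversals (hF : CIF F k t) (hne : F.Nonempty)
    (hT : T ∈ transversals F) : ¬IsBlocking (F ∪ transversals F) T := by
  intro hblock
  have hTF : T ∈ F :=
    hF.2.2.2.2 ▸ mem_transversals_of_card_le_tau Set.subset_union_left hblock hT.2.le
  have := hF.1 T hTF
  have := hF.card_of_mem_transversals hT
  have := hF.pos_of_nonempty hne
  have := hF.2.2.2.1
  omega

lemma exists_disjoint_of_isBlocking_diff (hF : CIF F k t) (hne : F.Nonempty)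
    {S : Set (Finset α)} (hS : S ⊆ transversals F) (hSne : S.Nonempty)
    (hblock : ∀ T ∈ S, IsBlocking (transversals F \ S) T) :
    ∃ T ∈ S, ∃ T' ∈ S, Disjoint T T' := by
  by_contra! h
  obtain ⟨T, hT⟩ := hSne
  refine hF.not_isBlocking_union_transversals hne (hS hT) ?_
  rintro B (hB | hB)
  · exact (hS hT).1 B hB
  · by_cases hBS : B ∈ S
    · obtain ⟨x, hxT, hxB⟩ := not_disjoint_iff.1 (h T hT B hBS)
      exact ⟨x, hxB, hxT⟩
    · exact hblock T hT B ⟨hB, hBS⟩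

end CIF

theorem stmt_8 (F : Set (Finset α)) (k t n : ℕ)
    (hF : CIF F k t) (hFne : F.Nonempty) (C : Fin n → Set (Finset α))
    (hne : ∀ i, (C i).Nonempty)
    (hcover : transversals F = ⋃ i, C i)
    (hdisjC : Pairwise fun i j => Disjoint (C i) (C j))
    (hblock : ∀ i, ∀ T ∈ C i, IsBlocking (transversals F \ C i) T) :
    2 * n ≤ Nat.choose (2 * t) t := by
  have hsub : ∀ i, C i ⊆ transversals F := fun i => hcover ▸ Set.subset_iUnion C i
  have hcard : ∀ i, ∀ X ∈ C i, #X = t := fun i X hX => hF.card_of_mem_transversals (hsub i hX)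
  have hmeet : ∀ i j, ∀ X ∈ C i, ∀ Y ∈ C j, (i = j → X = Y) → ¬Disjoint X Y := by
    intro i j X hX Y hY hXY
    rcases eq_or_ne i j with rfl | hij
    · rw [hXY rfl, disjoint_self_iff_empty, ← card_eq_zero, hcard i Y hY]
      exact (hF.pos_of_nonempty hFne).ne'
    · obtain ⟨x, hxY, hxX⟩ := hblock i X hX Y ⟨hsub j hY, Set.disjoint_right.1 (hdisjC hij) hY⟩
      exact not_disjoint_iff.2 ⟨x, hxX, hxY⟩
  choose T hT T' hT' hTT' using fun i =>
    hF.exists_disjoint_of_isBlocking_diff hFne (hsub i) (hne i) (hblock i)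
  have := bollobas_card_le_choose (univ : Finset (Fin n ⊕ Fin n)) (Sum.elim T T') (Sum.elim T' T)
    (a := t) (b := t) (by rintro (i | i) - <;> simp [hcard i _ (hT i), hcard i _ (hT' i)])
    (by rintro (i | i) - <;> simp [hcard i _ (hT i), hcard i _ (hT' i)])
    (by rintro (i | i) - <;> simp [hTT' i, (hTT' i).symm])
    (by
      rintro (i | i) - (j | j) - hij
      · exact hmeet i j _ (hT i) _ (hT' j) fun e => (hij (congrArg _ e)).elim
      · exact hmeet i j _ (hT i) _ (hT j) fun e => e ▸ rfl
      · exact hmeet i j _ (hT' i) _ (hT' j) fun e => e ▸ rfl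
      · exact hmeet i j _ (hT' i) _ (hT j) fun e => (hij (congrArg _ e)).elim)
  rwa [card_univ, Fintype.card_sum, Fintype.card_fin, ← two_mul, ← two_mul] at this
end

section
/- Let A be a maximal intersecting family of l-sets and, for each point x of A, let F_x be a uniform family with k-sets, τ(F_x) = t, and pairwise disjoint point sets. Define G = {⊔_{x∈A} B_x : A ∈ A, B_x ∈ F_x for all x ∈ A}. Then G^⊤ = {⊔_{x∈A} T_x : A ∈ A, T_x ∈ F_x^⊤ for all x ∈ A}; in particular G is kl-uniform and τ(G) = tl. -/
open Finset

variable {α : Type*} {β : Type*}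

/-- The composed family: one block of `F x` for each point `x` of a block of `𝒜`. -/
def comp [DecidableEq α] (𝒜 : Set (Finset β)) (F : β → Set (Finset α)) :
    Set (Finset α) :=
  {C | ∃ S ∈ 𝒜, ∃ f : β → Finset α, (∀ x ∈ S, f x ∈ F x) ∧ C = S.biUnion f}

theorem stmt_9 [DecidableEq α] (𝒜 : Set (Finset β)) (l k t : ℕ)
    (h𝒜 : MIF 𝒜 l) (ht1 : 1 ≤ t) (F : β → Set (Finset α))
    (hU : ∀ x ∈ pts 𝒜, FamUniform (F x) k)
    (ht : ∀ x ∈ pts 𝒜, tau (F x) = t)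
    (hpd : ∀ x ∈ pts 𝒜, ∀ y ∈ pts 𝒜, x ≠ y → Disjoint (pts (F x)) (pts (F y))) :
    transversals (comp 𝒜 F) = comp 𝒜 (fun x => transversals (F x)) ∧
    FamUniform (comp 𝒜 F) (k * l) ∧ tau (comp 𝒜 F) = t * l := by
  classical
  obtain ⟨hUl, hHB, hEq⟩ := h𝒜
  -- basic facts about the MIF family
  have h𝒜ne : ∃ A, A ∈ 𝒜 := by
    obtain ⟨C0, hC0⟩ := hHB
    have hne : {n | ∃ C : Finset β, C.card = n ∧ IsBlocking 𝒜 C}.Nonempty :=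
      ⟨C0.card, C0, rfl, hC0⟩
    obtain ⟨C1, hcard, hbl⟩ := Nat.sInf_mem hne
    exact ⟨C1, hEq ▸ (⟨hbl, hcard⟩ : C1 ∈ transversals 𝒜)⟩
  obtain ⟨A₀, hA₀⟩ := h𝒜ne
  have htau𝒜 : tau 𝒜 = l := by
    have h1 : A₀ ∈ transversals 𝒜 := hEq ▸ hA₀
    rw [← h1.2, hUl A₀ hA₀]
  have hmempts : ∀ A ∈ 𝒜, ∀ x ∈ A, x ∈ pts 𝒜 := by
    intro A hA x hx
    exact Set.mem_biUnion hA hx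
  have hint : ∀ A ∈ 𝒜, ∀ B ∈ 𝒜, ∃ x ∈ A, x ∈ B := by
    intro A hA B hB
    have h1 : A ∈ transversals 𝒜 := hEq ▸ hA
    obtain ⟨x, hxB, hxA⟩ := h1.1 B hB
    exact ⟨x, hxA, hxB⟩
  have hl1 : 1 ≤ l := by
    by_contra h
    have hl0 : l = 0 := by omega
    have : A₀ = ∅ := Finset.card_eq_zero.mp (by rw [hUl A₀ hA₀, hl0])
    obtain ⟨C0, hC0⟩ := hHB
    obtain ⟨x, hx, -⟩ := hC0 A₀ hA₀
    simp [this] at hx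
  -- per-point facts
  have hHBx : ∀ x ∈ pts 𝒜, {n | ∃ C : Finset α, C.card = n ∧ IsBlocking (F x) C}.Nonempty := by
    intro x hx
    by_contra h
    have : tau (F x) = 0 := Nat.sInf_eq_zero.mpr (Or.inr (Set.not_nonempty_iff_eq_empty.mp h))
    rw [ht x hx] at this; omega
  have hFne : ∀ x ∈ pts 𝒜, (F x).Nonempty := by
    intro x hx
    by_contra h
    have hemp : F x = ∅ := Set.not_nonempty_iff_eq_empty.mp h
    have : tau (F x) ≤ 0 := Nat.sInf_le ⟨∅, Finset.card_empty, by simp [IsBlocking, hemp]⟩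
    rw [ht x hx] at this; omega
  have hblock_pts : ∀ x ∈ pts 𝒜, ∀ B ∈ F x, ∀ a ∈ B, a ∈ pts (F x) := by
    intro x hx B hB a ha
    exact Set.mem_biUnion hB ha
  -- transversals of each F x
  have hTsub : ∀ x ∈ pts 𝒜, ∀ T : Finset α, IsBlocking (F x) T → T.card = t →
      ∀ a ∈ T, a ∈ pts (F x) := by
    intro x hx T hbl hcard a haT
    by_contra hnot
    have herase : IsBlocking (F x) (T.erase a) := by
      intro B hB
      obtain ⟨y, hyB, hyT⟩ := hbl B hB
      have : y ≠ a := fun h => hnot (h ▸ hblock_pts x hx B hB y hyB)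
      exact ⟨y, hyB, Finset.mem_erase.mpr ⟨this, hyT⟩⟩
    have hle : tau (F x) ≤ (T.erase a).card := Nat.sInf_le ⟨_, rfl, herase⟩
    rw [ht x hx, Finset.card_erase_of_mem haT, hcard] at hle
    omega
  have htransx : ∀ x ∈ pts 𝒜, ∃ T : Finset α, IsBlocking (F x) T ∧ T.card = t := by
    intro x hx
    obtain ⟨T, hcard, hbl⟩ := Nat.sInf_mem (hHBx x hx)
    exact ⟨T, hbl, by rw [hcard]; exact ht x hx⟩
  -- the forward construction: disjoint unions of transversals block comp 𝒜 F
  have hconstr : ∀ A ∈ 𝒜, ∀ f : β → Finset α,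
      (∀ x ∈ A, IsBlocking (F x) (f x) ∧ (f x).card = t) →
      IsBlocking (comp 𝒜 F) (A.biUnion f) ∧ (A.biUnion f).card = t * l := by
    intro A hA f hf
    constructor
    · rintro B ⟨S, hS, g, hg, rfl⟩
      obtain ⟨x, hxA, hxS⟩ := hint A hA S hS
      obtain ⟨y, hyg, hyf⟩ := (hf x hxA).1 (g x) (hg x hxS)
      exact ⟨y, Finset.mem_biUnion.2 ⟨x, hxS, hyg⟩, Finset.mem_biUnion.2 ⟨x, hxA, hyf⟩⟩
    · have hdisj : ∀ x ∈ A, ∀ y ∈ A, x ≠ y → Disjoint (f x) (f y) := by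
        intro x hx y hy hxy
        refine Finset.disjoint_left.mpr fun a hax hay => ?_
        have h1 : a ∈ pts (F x) :=
          hTsub x (hmempts A hA x hx) (f x) (hf x hx).1 (hf x hx).2 a hax
        have h2 : a ∈ pts (F y) :=
          hTsub y (hmempts A hA y hy) (f y) (hf y hy).1 (hf y hy).2 a hay
        exact Set.disjoint_left.mp
          (hpd x (hmempts A hA x hx) y (hmempts A hA y hy) hxy) h1 h2
      rw [Finset.card_biUnion hdisj]
      rw [Finset.sum_congr rfl fun x hx => (hf x hx).2, Finset.sum_const, hUl A hA,
        smul_eq_mul, mul_comm]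
  -- α is nonempty
  have hαne : Nonempty α := by
    obtain ⟨x₀, hx₀A⟩ := Finset.card_pos.mp (show 0 < A₀.card by rw [hUl A₀ hA₀]; omega)
    have hx₀ : x₀ ∈ pts 𝒜 := hmempts A₀ hA₀ x₀ hx₀A
    obtain ⟨T, hT, -⟩ := htransx x₀ hx₀
    obtain ⟨B, hB⟩ := hFne x₀ hx₀
    obtain ⟨a, -, -⟩ := hT B hB
    exact ⟨a⟩
  -- the structure of any blocking set of comp 𝒜 F
  have hlow : ∀ C : Finset α, IsBlocking (comp 𝒜 F) C →
      ∃ D₀ : Finset β, IsBlocking 𝒜 D₀ ∧ (∀ x ∈ D₀, x ∈ pts 𝒜) ∧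
        (∀ x ∈ D₀, IsBlocking (F x) (C.filter fun a => a ∈ pts (F x))) ∧
        D₀.biUnion (fun x => C.filter fun a => a ∈ pts (F x)) ⊆ C ∧
        l ≤ D₀.card := by
    intro C hC
    set Cx : β → Finset α := fun x => C.filter fun a => a ∈ pts (F x) with hCxdef
    set D : Set β := {x | x ∈ pts 𝒜 ∧ IsBlocking (F x) (Cx x)} with hDdef
    have hCxne : ∀ x ∈ D, (Cx x).Nonempty := by
      rintro x ⟨hx, hbl⟩
      obtain ⟨B, hB⟩ := hFne x hx
      obtain ⟨y, hyB, hyC⟩ := hbl B hB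
      exact ⟨y, hyC⟩
    have hfin : D.Finite := by
      set g : β → α := fun x => if h : (Cx x).Nonempty then h.choose else hαne.some with hgdef
      have hgmem : ∀ x ∈ D, g x ∈ Cx x := by
        intro x hx
        simp only [hgdef, dif_pos (hCxne x hx)]
        exact (hCxne x hx).choose_spec
      have hginj : Set.InjOn g D := by
        intro x hx y hy hxy
        by_contra hne
        have h1 : g x ∈ pts (F x) := (Finset.mem_filter.mp (hgmem x hx)).2
        have h2 : g y ∈ pts (F y) := (Finset.mem_filter.mp (hgmem y hy)).2
        rw [hxy] at h1
        exact Set.disjoint_left.mp (hpd x hx.1 y hy.1 hne) h1 h2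
      have himg : (g '' D).Finite := by
        apply Set.Finite.subset C.finite_toSet
        rintro a ⟨x, hx, rfl⟩
        exact (Finset.mem_filter.mp (hgmem x hx)).1
      exact Set.Finite.of_finite_image himg hginj
    have hblD : IsBlocking 𝒜 hfin.toFinset := by
      intro A hA
      by_contra hno
      push_neg at hno
      have hnb : ∀ x ∈ A, ∃ B, B ∈ F x ∧ ∀ y ∈ B, y ∉ C := by
        intro x hx
        have hxpts : x ∈ pts 𝒜 := hmempts A hA x hx
        have hxD : x ∉ D := fun h => hno x hx (hfin.mem_toFinset.mpr h)
        have hnbl : ¬ IsBlocking (F x) (Cx x) := fun h => hxD ⟨hxpts, h⟩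
        rw [IsBlocking] at hnbl
        push_neg at hnbl
        obtain ⟨B, hB, hBn⟩ := hnbl
        refine ⟨B, hB, fun y hy hyC => ?_⟩
        exact hBn y hy (Finset.mem_filter.mpr ⟨hyC, hblock_pts x hxpts B hB y hy⟩)
      choose! g hg1 hg2 using hnb
      obtain ⟨y, hy1, hy2⟩ := hC (A.biUnion g) ⟨A, hA, g, hg1, rfl⟩
      obtain ⟨x, hxA, hyg⟩ := Finset.mem_biUnion.mp hy1
      exact hg2 x hxA y hyg hy2
    refine ⟨hfin.toFinset, hblD, ?_, ?_, ?_, ?_⟩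
    · intro x hx
      exact (hfin.mem_toFinset.mp hx).1
    · intro x hx
      exact (hfin.mem_toFinset.mp hx).2
    · intro a ha
      obtain ⟨x, -, hax⟩ := Finset.mem_biUnion.mp ha
      exact (Finset.mem_filter.mp hax).1
    · have hle : tau 𝒜 ≤ hfin.toFinset.card := Nat.sInf_le ⟨_, rfl, hblD⟩
      rwa [htau𝒜] at hle
  -- card of biUnion of the filtered pieces
  have hsum : ∀ C : Finset α, ∀ D₀ : Finset β, (∀ x ∈ D₀, x ∈ pts 𝒜) →
      (D₀.biUnion (fun x => C.filter fun a => a ∈ pts (F x))).card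
        = ∑ x ∈ D₀, (C.filter fun a => a ∈ pts (F x)).card := by
    intro C D₀ hD₀
    apply Finset.card_biUnion
    intro x hx y hy hxy
    refine Finset.disjoint_left.mpr fun a hax hay => ?_
    exact Set.disjoint_left.mp (hpd x (hD₀ x hx) y (hD₀ y hy) hxy)
      (Finset.mem_filter.mp hax).2 (Finset.mem_filter.mp hay).2
  -- every blocking set of comp 𝒜 F has at least t*l points
  have hlowcard : ∀ C : Finset α, IsBlocking (comp 𝒜 F) C → t * l ≤ C.card := by
    intro C hC
    obtain ⟨D₀, hbl, hDpts, hDblk, hDsub, hDcard⟩ := hlow C hC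
    have h1 : (D₀.biUnion (fun x => C.filter fun a => a ∈ pts (F x))).card ≤ C.card :=
      Finset.card_le_card hDsub
    rw [hsum C D₀ hDpts] at h1
    have h2 : ∀ x ∈ D₀, t ≤ (C.filter fun a => a ∈ pts (F x)).card := by
      intro x hx
      have hle : tau (F x) ≤ (C.filter fun a => a ∈ pts (F x)).card :=
        Nat.sInf_le ⟨_, rfl, hDblk x hx⟩
      rwa [ht x (hDpts x hx)] at hle
    calc t * l ≤ t * D₀.card := Nat.mul_le_mul_left t hDcard
      _ = ∑ _x ∈ D₀, t := by rw [Finset.sum_const, smul_eq_mul, mul_comm]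
      _ ≤ ∑ x ∈ D₀, (C.filter fun a => a ∈ pts (F x)).card := Finset.sum_le_sum h2
      _ ≤ C.card := h1
  -- a canonical blocking set of size t*l
  choose! T0 hT0bl hT0card using htransx
  have hW := hconstr A₀ hA₀ T0 (fun x hx =>
    ⟨hT0bl x (hmempts A₀ hA₀ x hx), hT0card x (hmempts A₀ hA₀ x hx)⟩)
  -- tau of the composed family
  have htauG : tau (comp 𝒜 F) = t * l := by
    apply le_antisymm
    · exact Nat.sInf_le (show t * l ∈
        {n | ∃ C : Finset α, C.card = n ∧ IsBlocking (comp 𝒜 F) C} from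
        ⟨A₀.biUnion T0, hW.2, hW.1⟩)
    · apply le_csInf (show {n | ∃ C : Finset α, C.card = n ∧
          IsBlocking (comp 𝒜 F) C}.Nonempty from ⟨t * l, A₀.biUnion T0, hW.2, hW.1⟩)
      rintro n ⟨C, rfl, hCbl⟩
      exact hlowcard C hCbl
  -- uniformity of the composed family
  have hunif : FamUniform (comp 𝒜 F) (k * l) := by
    rintro B ⟨S, hS, g, hg, rfl⟩
    have hdisj : ∀ x ∈ S, ∀ y ∈ S, x ≠ y → Disjoint (g x) (g y) := by
      intro x hx y hy hxy
      refine Finset.disjoint_left.mpr fun a hax hay => ?_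
      exact Set.disjoint_left.mp
        (hpd x (hmempts S hS x hx) y (hmempts S hS y hy) hxy)
        (hblock_pts x (hmempts S hS x hx) (g x) (hg x hx) a hax)
        (hblock_pts y (hmempts S hS y hy) (g y) (hg y hy) a hay)
    rw [Finset.card_biUnion hdisj,
      Finset.sum_congr rfl (fun x hx => hU x (hmempts S hS x hx) (g x) (hg x hx)),
      Finset.sum_const, hUl S hS, smul_eq_mul, mul_comm]
  refine ⟨?_, hunif, htauG⟩
  -- the transversal equality
  ext C
  constructor
  · rintro ⟨hCbl, hCcard⟩
    rw [htauG] at hCcard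
    obtain ⟨D₀, hbl, hDpts, hDblk, hDsub, hDcard⟩ := hlow C hCbl
    set Cx : β → Finset α := fun x => C.filter fun a => a ∈ pts (F x) with hCxdef
    have hterm : ∀ x ∈ D₀, t ≤ (Cx x).card := by
      intro x hx
      have hle : tau (F x) ≤ (Cx x).card := Nat.sInf_le ⟨_, rfl, hDblk x hx⟩
      rwa [ht x (hDpts x hx)] at hle
    have hsumle : ∑ x ∈ D₀, (Cx x).card ≤ C.card := by
      rw [← hsum C D₀ hDpts]
      exact Finset.card_le_card hDsub
    have htD : t * D₀.card ≤ ∑ x ∈ D₀, (Cx x).card := by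
      calc t * D₀.card = ∑ _x ∈ D₀, t := by rw [Finset.sum_const, smul_eq_mul, mul_comm]
        _ ≤ _ := Finset.sum_le_sum hterm
    -- all inequalities are equalities
    have hDl : D₀.card = l := by
      have h1 : t * D₀.card ≤ t * l := hCcard ▸ le_trans htD hsumle
      have h2 : t * l ≤ t * D₀.card := Nat.mul_le_mul_left t hDcard
      exact Nat.eq_of_mul_eq_mul_left (by omega) (le_antisymm h1 h2)
    have hsumeq : ∑ x ∈ D₀, (Cx x).card = t * D₀.card := by
      refine le_antisymm ?_ htD
      calc ∑ x ∈ D₀, (Cx x).card ≤ C.card := hsumle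
        _ = t * l := hCcard
        _ = t * D₀.card := by rw [hDl]
    have hCeq : C = D₀.biUnion Cx := by
      refine (Finset.eq_of_subset_of_card_le hDsub ?_).symm
      rw [hsum C D₀ hDpts, hsumeq, hDl, hCcard]
    have hterm_eq : ∀ x ∈ D₀, (Cx x).card = t := by
      intro x hx
      by_contra hne
      have hlt : t < (Cx x).card := lt_of_le_of_ne (hterm x hx) (Ne.symm hne)
      have hstrict : ∑ _x ∈ D₀, t < ∑ x ∈ D₀, (Cx x).card :=
        Finset.sum_lt_sum hterm ⟨x, hx, hlt⟩
      rw [Finset.sum_const, smul_eq_mul, mul_comm, hsumeq] at hstrict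
      exact lt_irrefl _ hstrict
    refine ⟨D₀, ?_, Cx, ?_, hCeq⟩
    · rw [hEq]
      refine ⟨hbl, ?_⟩
      rw [hDl, htau𝒜]
    · intro x hx
      exact ⟨hDblk x hx, by rw [hterm_eq x hx, ht x (hDpts x hx)]⟩
  · rintro ⟨S, hS, f, hf, rfl⟩
    have hf' : ∀ x ∈ S, IsBlocking (F x) (f x) ∧ (f x).card = t := by
      intro x hx
      obtain ⟨h1, h2⟩ := hf x hx
      exact ⟨h1, by rw [h2, ht x (hmempts S hS x hx)]⟩
    obtain ⟨hbl, hcard⟩ := hconstr S hS f hf'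
    exact ⟨hbl, by rw [hcard, htauG]⟩
end

section
/- For positive integers t ≤ k, the family G(k,t) (blocks X_n together with one chosen point from each of the other k−|X_n| consecutive classes around a t-cycle of pairwise disjoint classes X_0,…,X_{t−1}, where |X_n| = k−⌊t/2⌋ for 0 ≤ n ≤ ⌊(t−1)/2⌋ and |X_n| = k−⌊(t−1)/2⌋ otherwise) is an intersecting family of k-sets with transversal number τ(G(k,t)) = t. -/
open Finset

variable {α : Type*} {β : Type*}

/-- The size of the class `X_n` in the cycle construction `G(k,t)`. -/
def sz (k t n : ℕ) : ℕ := if n ≤ (t - 1) / 2 then k - t / 2 else k - (t - 1) / 2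

/-- The class `X_n` of the cycle construction: points `(n, p)` with `p < |X_n|`. -/
def cls (k t n : ℕ) : Finset (ℕ × ℕ) := {n} ×ˢ Finset.range (sz k t n)

/-- The family `G(k,t)`: all `k`-sets consisting of a class `X_n` together with one
chosen point from each of the next `k - |X_n|` classes around the `t`-cycle. -/
def Gfam (k t : ℕ) : Set (Finset (ℕ × ℕ)) :=
  {B | ∃ n < t, ∃ g : ℕ → ℕ × ℕ,
    (∀ i, 1 ≤ i → i ≤ k - sz k t n → g i ∈ cls k t ((n + i) % t)) ∧
    B = cls k t n ∪ Finset.image g (Finset.Icc 1 (k - sz k t n))}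

/-!
Two blocks based at different classes meet because one of the two classes lies within the reach
`k - |X|` of the other along the cycle, where the other block has picked a point.
Marking one point in every class gives a blocking set of size `t`. Conversely, let `C` be
blocking. If `X_n` misses `C`, a block based at `X_n` can avoid `C` unless some class `X_f`
with `f = n + i`, `1 ≤ i ≤ k - |X_n|`, lies inside `C`; since `i < |X_f|`, the point
`(f, i)` is then available in `C`. Sending `n` to a point of `C ∩ X_n` (to `(n, 0)` when
`X_n ⊆ C`) or otherwise to such an `(f, i)` is injective, so `|C| ≥ t`.
-/

lemma tau_eq_of_isBlocking {F : Set (Finset α)} {C : Finset α} {m : ℕ}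
    (hC : IsBlocking F C) (hcard : C.card = m) (hmin : ∀ D, IsBlocking F D → m ≤ D.card) :
    tau F = m :=
  le_antisymm (Nat.sInf_le ⟨C, hcard, hC⟩)
    (le_csInf ⟨m, C, hcard, hC⟩ (by rintro _ ⟨D, rfl, hD⟩; exact hmin D hD))

lemma Nat.eq_of_add_mod_eq {t a b c : ℕ} (ha : a < t) (hb : b < t)
    (h : (c + a) % t = (c + b) % t) : a = b := by
  have := Nat.ModEq.add_left_cancel' c h
  rwa [Nat.ModEq, Nat.mod_eq_of_lt ha, Nat.mod_eq_of_lt hb] at this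

namespace CycleConstruction

variable {k t n : ℕ}

def block (k t n : ℕ) (g : ℕ → ℕ × ℕ) : Finset (ℕ × ℕ) :=
  cls k t n ∪ image g (Icc 1 (k - sz k t n))

def IsSelection (k t n : ℕ) (g : ℕ → ℕ × ℕ) : Prop :=
  ∀ i, 1 ≤ i → i ≤ k - sz k t n → g i ∈ cls k t ((n + i) % t)

lemma mem_Gfam {B : Finset (ℕ × ℕ)} :
    B ∈ Gfam k t ↔ ∃ n < t, ∃ g, IsSelection k t n g ∧ B = block k t n g :=
  Iff.rfl

lemma mem_cls {x : ℕ × ℕ} : x ∈ cls k t n ↔ x.1 = n ∧ x.2 < sz k t n := by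
  obtain ⟨a, b⟩ := x
  simp [cls, eq_comm, and_comm]

lemma card_cls : (cls k t n).card = sz k t n := by
  simp [cls]

lemma sz_le : sz k t n ≤ k := by
  unfold sz; split <;> omega

lemma sz_pos (htk : t ≤ k) (hn : n < t) : 0 < sz k t n := by
  unfold sz; split <;> omega

lemma sub_sz_lt (htk : t ≤ k) (hn : n < t) : k - sz k t n < t := by
  unfold sz; split <;> omega

lemma lt_sz_add_mod (htk : t ≤ k) (hn : n < t) {i : ℕ} (hi : i ≤ k - sz k t n) :
    i < sz k t ((n + i) % t) := by
  by_cases hlt : n + i < t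
  · rw [Nat.mod_eq_of_lt hlt]
    unfold sz at *; split_ifs at * <;> omega
  · unfold sz at *; split_ifs at * <;> omega

lemma exists_reach (htk : t ≤ k) {n n' : ℕ} (hn : n < t) (hn' : n' < t) (hne : n ≠ n') :
    (∃ i ∈ Icc 1 (k - sz k t n), (n + i) % t = n') ∨
      ∃ i ∈ Icc 1 (k - sz k t n'), (n' + i) % t = n := by
  wlog hlt : n < n' generalizing n n'
  · exact (this hn' hn hne.symm (by omega)).symm
  by_cases hd : n' - n ≤ k - sz k t n
  · refine .inl ⟨n' - n, mem_Icc.2 ⟨by omega, hd⟩, ?_⟩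
    rw [Nat.add_sub_cancel' hlt.le, Nat.mod_eq_of_lt hn']
  · refine .inr ⟨n + t - n', mem_Icc.2 ⟨by omega, ?_⟩, ?_⟩
    · unfold sz at *; split_ifs at * <;> omega
    · rw [show n' + (n + t - n') = n + t by omega, Nat.add_mod_right, Nat.mod_eq_of_lt hn]

lemma cls_subset_block (g : ℕ → ℕ × ℕ) : cls k t n ⊆ block k t n g :=
  subset_union_left

lemma apply_mem_block {g : ℕ → ℕ × ℕ} {i : ℕ} (hi : i ∈ Icc 1 (k - sz k t n)) :
    g i ∈ block k t n g :=
  mem_union_right _ (mem_image_of_mem g hi)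

lemma card_block (htk : t ≤ k) (hn : n < t) {g : ℕ → ℕ × ℕ} (hg : IsSelection k t n g) :
    (block k t n g).card = k := by
  have hm := sub_sz_lt htk hn
  have hdisj : Disjoint (cls k t n) (image g (Icc 1 (k - sz k t n))) := by
    rw [disjoint_right]
    intro x hx hxn
    obtain ⟨i, hi, rfl⟩ := mem_image.1 hx
    rw [mem_Icc] at hi
    have h : (n + 0) % t = (n + i) % t := by
      rw [add_zero, Nat.mod_eq_of_lt hn, ← (mem_cls.1 (hg i hi.1 hi.2)).1, (mem_cls.1 hxn).1]
    have := Nat.eq_of_add_mod_eq (t := t) (by omega) (by omega) h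
    omega
  have hinj : Set.InjOn g (Icc 1 (k - sz k t n)) := by
    intro i hi j hj hij
    simp only [coe_Icc, Set.mem_Icc] at hi hj
    refine Nat.eq_of_add_mod_eq (t := t) (c := n) (by omega) (by omega) ?_
    rw [← (mem_cls.1 (hg i hi.1 hi.2)).1, ← (mem_cls.1 (hg j hj.1 hj.2)).1, hij]
  rw [block, card_union_of_disjoint hdisj, card_cls, card_image_of_injOn hinj, Nat.card_Icc]
  have := sz_le (k := k) (t := t) (n := n)
  omega

lemma famUniform_Gfam (htk : t ≤ k) : FamUniform (Gfam k t) k := by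
  intro B hB
  obtain ⟨n, hn, g, hg, rfl⟩ := mem_Gfam.1 hB
  exact card_block htk hn hg

lemma block_meets_block {n' : ℕ} {g g' : ℕ → ℕ × ℕ} (hg : IsSelection k t n g) {i : ℕ}
    (hi : i ∈ Icc 1 (k - sz k t n)) (hreach : (n + i) % t = n') :
    ∃ x ∈ block k t n g, x ∈ block k t n' g' := by
  rw [mem_Icc] at hi
  refine ⟨g i, apply_mem_block (mem_Icc.2 hi), cls_subset_block g' ?_⟩
  rw [← hreach]
  exact hg i hi.1 hi.2

lemma famIntersecting_Gfam (htk : t ≤ k) : FamIntersecting (Gfam k t) := by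
  intro A hA B hB
  obtain ⟨n, hn, g, hg, rfl⟩ := mem_Gfam.1 hA
  obtain ⟨n', hn', g', hg', rfl⟩ := mem_Gfam.1 hB
  by_cases hne : n = n'
  · subst hne
    have hx : (n, 0) ∈ cls k t n := mem_cls.2 ⟨rfl, sz_pos htk hn⟩
    exact ⟨_, cls_subset_block g hx, cls_subset_block g' hx⟩
  rcases exists_reach htk hn hn' hne with ⟨i, hi, hreach⟩ | ⟨i, hi, hreach⟩
  · exact block_meets_block hg hi hreach
  · obtain ⟨x, hxB, hxA⟩ := block_meets_block (g' := g) hg' hi hreach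
    exact ⟨x, hxA, hxB⟩

lemma isBlocking_image_zero (htk : t ≤ k) :
    IsBlocking (Gfam k t) ((range t).image fun n => (n, 0)) := by
  intro B hB
  obtain ⟨n, hn, g, -, rfl⟩ := mem_Gfam.1 hB
  exact ⟨(n, 0), cls_subset_block g (mem_cls.2 ⟨rfl, sz_pos htk hn⟩),
    mem_image_of_mem _ (mem_range.2 hn)⟩

lemma exists_mem_cls_or_cls_subset {C : Finset (ℕ × ℕ)} (hC : IsBlocking (Gfam k t) C)
    (hn : n < t) :
    (∃ x ∈ C, x ∈ cls k t n) ∨ ∃ i ∈ Icc 1 (k - sz k t n), cls k t ((n + i) % t) ⊆ C := by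
  by_contra! ⟨hmiss, hnot⟩
  have hout : ∀ i, ∃ x, 1 ≤ i → i ≤ k - sz k t n → x ∈ cls k t ((n + i) % t) ∧ x ∉ C := by
    intro i
    by_cases hi : 1 ≤ i ∧ i ≤ k - sz k t n
    · obtain ⟨x, hx, hxC⟩ := not_subset.1 (hnot i (mem_Icc.2 hi))
      exact ⟨x, fun _ _ => ⟨hx, hxC⟩⟩
    · exact ⟨(0, 0), fun h1 h2 => absurd ⟨h1, h2⟩ hi⟩
  choose g hg using hout
  obtain ⟨x, hxB, hxC⟩ := hC (block k t n g)
    (mem_Gfam.2 ⟨n, hn, g, fun i h1 h2 => (hg i h1 h2).1, rfl⟩)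
  rcases mem_union.1 hxB with hx | hx
  · exact hmiss x hxC hx
  · obtain ⟨i, hi, rfl⟩ := mem_image.1 hx
    rw [mem_Icc] at hi
    exact (hg i hi.1 hi.2).2 hxC

/-- The point of `C` that the injection of the lower bound assigns to the class `X_n`. -/
lemma exists_mark (htk : t ≤ k) {C : Finset (ℕ × ℕ)} (hC : IsBlocking (Gfam k t) C)
    (hn : n < t) :
    ∃ x ∈ C, (x.1 = n ∧ (cls k t n ⊆ C → x.2 = 0)) ∨
      (1 ≤ x.2 ∧ cls k t x.1 ⊆ C ∧ x.1 = (n + x.2) % t) := by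
  by_cases hsub : cls k t n ⊆ C
  · exact ⟨(n, 0), hsub (mem_cls.2 ⟨rfl, sz_pos htk hn⟩), .inl ⟨rfl, fun _ => rfl⟩⟩
  rcases exists_mem_cls_or_cls_subset hC hn with ⟨x, hxC, hx⟩ | ⟨i, hi, hsub'⟩
  · exact ⟨x, hxC, .inl ⟨(mem_cls.1 hx).1, fun h => absurd h hsub⟩⟩
  · rw [mem_Icc] at hi
    exact ⟨((n + i) % t, i), hsub' (mem_cls.2 ⟨rfl, lt_sz_add_mod htk hn hi.2⟩),
      .inr ⟨hi.1, hsub', rfl⟩⟩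

lemma card_le_of_isBlocking (htk : t ≤ k) {C : Finset (ℕ × ℕ)} (hC : IsBlocking (Gfam k t) C) :
    t ≤ C.card := by
  choose! φ hφC hφ using fun n (hn : n ∈ range t) => exists_mark htk hC (mem_range.1 hn)
  calc t = (range t).card := (card_range t).symm
    _ ≤ C.card := card_le_card_of_injOn φ hφC ?_
  intro n hn n' hn' he
  simp only [coe_range, Set.mem_Iio] at hn hn'
  have hspec := hφ n (mem_range.2 hn)
  rw [he] at hspec
  rcases hspec with ⟨h1, h0⟩ | ⟨hpos, hsub, hmod⟩ <;>
    rcases hφ n' (mem_range.2 hn') with ⟨h1', h0'⟩ | ⟨hpos', hsub', hmod'⟩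
  · exact h1.symm.trans h1'
  · have := h0 (h1 ▸ hsub')
    omega
  · have := h0' (h1' ▸ hsub)
    omega
  · rw [hmod, add_comm n, add_comm n'] at hmod'
    exact Nat.eq_of_add_mod_eq hn hn' hmod'

end CycleConstruction

open CycleConstruction in
theorem stmt_13_general (k t : ℕ) (htk : t ≤ k) :
    FamIntersecting (Gfam k t) ∧ FamUniform (Gfam k t) k ∧
    tau (Gfam k t) = t := by
  refine ⟨famIntersecting_Gfam htk, famUniform_Gfam htk, ?_⟩
  refine tau_eq_of_isBlocking (isBlocking_image_zero htk) ?_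
    fun D hD => card_le_of_isBlocking htk hD
  rw [card_image_of_injective _ fun a b h => (Prod.ext_iff.1 h).1, card_range]

theorem stmt_13 (k t : ℕ) (ht : 1 ≤ t) (htk : t ≤ k) :
    FamIntersecting (Gfam k t) ∧ FamUniform (Gfam k t) k ∧
    tau (Gfam k t) = t :=
  stmt_13_general k t htk
end
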